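/- Under the error bound property with constants M = f* − d(x^0) and κ > 0, Algorithm (DG) with constant step size α_k = 1/L_d converges globally linearly in the dual: for all k ≥ 0, ‖x^k − [x^k]_{X*}‖ ≤ (κ/√(1+κ²))^k · R_d, and for all k ≥ 1, f* − d(x^k) ≤ (L_d R_d²/2) · (κ²/(1+κ²))^{k−1}. -/

import Mathlib

/-!
Write `x⁺` for the projected gradient step from `x`. The Lagrangian grows quadratically around
its minimiser, which makes the dual function `d` concave and `L`-smooth with `L = ‖G‖² / σ`;
hence every `y ∈ K*` satisfies `d y - d x⁺ ≤ (L/2) (‖x - y‖² - ‖x⁺ - y‖²)`.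
With `y` the projection of `x` onto `X*` this bounds the gap `f* - d x⁺` by the decrease of the
squared distance to `X*`. With `y = x` it shows that `d` increases along the iterates (so the
error bound applies to all of them) and, applied at `x⁺`, that `(L/2) ‖∇⁺d(x⁺)‖² ≤ f* - d x⁺`;
the error bound turns the latter into `(L / 2κ²) dist(x⁺, X*)² ≤ f* - d x⁺`.
Together, `(1 + κ⁻²) dist(x⁺, X*)² ≤ dist(x, X*)²`.
-/

open scoped RealInnerProductSpace
open Filter Topology Set

section ProjectedGradient

variable {H : Type*} [NormedAddCommGroup H] [InnerProductSpace ℝ H]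

def IsNearestPointMap (C : Set H) (P : H → H) : Prop :=
  ∀ z, P z ∈ C ∧ ∀ w ∈ C, ‖z - P z‖ ≤ ‖z - w‖

theorem IsNearestPointMap.inner_sub_le_zero {C : Set H} {P : H → H} (hP : IsNearestPointMap C P)
    (hC : Convex ℝ C) (z : H) {w : H} (hw : w ∈ C) : ⟪z - P z, w - P z⟫ ≤ 0 := by
  have : Nonempty C := ⟨⟨w, hw⟩⟩
  refine (norm_eq_iInf_iff_real_inner_le_zero hC (hP z).1).1 (le_antisymm ?_ ?_) w hw
  · exact le_ciInf fun v : C => (hP z).2 v v.2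
  · exact ciInf_le (f := fun w : C => ‖z - w‖) ⟨0, by rintro _ ⟨v, rfl⟩; exact norm_nonneg _⟩
      ⟨P z, (hP z).1⟩

structure HasSmoothSupergradient (φ : H → ℝ) (γ : H → H) (L : ℝ) : Prop where
  le_add_inner : ∀ z w, φ w ≤ φ z + ⟪γ z, w - z⟫
  add_inner_sub_le : ∀ z w, φ z + ⟪γ z, w - z⟫ - L / 2 * ‖w - z‖ ^ 2 ≤ φ w

noncomputable def projGradStep (P γ : H → H) (L : ℝ) (z : H) : H := P (z + (1 / L) • γ z)

variable {φ : H → ℝ} {γ P : H → H} {L : ℝ} {C : Set H}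

theorem HasSmoothSupergradient.sub_projGradStep_le (hφ : HasSmoothSupergradient φ γ L)
    (hL : 0 < L) (hC : Convex ℝ C) (hP : IsNearestPointMap C P) (z : H) {y : H} (hy : y ∈ C) :
    φ y - φ (projGradStep P γ L z) ≤
      L / 2 * (‖z - y‖ ^ 2 - ‖projGradStep P γ L z - y‖ ^ 2) := by
  set q := projGradStep P γ L z
  have hvi : ⟪z - q, y - q⟫ + 1 / L * ⟪γ z, y - q⟫ ≤ 0 := by
    have h : ⟪z + (1 / L) • γ z - q, y - q⟫ ≤ 0 := hP.inner_sub_le_zero hC _ hy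
    rwa [add_sub_right_comm, inner_add_left, real_inner_smul_left] at h
  have hvi' : L * ⟪z - q, y - q⟫ + ⟪γ z, y - q⟫ ≤ 0 := by
    have h := mul_le_mul_of_nonneg_left hvi hL.le
    rwa [mul_zero, mul_add, ← mul_assoc, mul_one_div_cancel hL.ne', one_mul] at h
  have hsup := hφ.le_add_inner z y
  have hdesc := hφ.add_inner_sub_le z q
  have hnorm : ‖z - y‖ ^ 2 = ‖z - q‖ ^ 2 - 2 * ⟪z - q, y - q⟫ + ‖q - y‖ ^ 2 := by
    rw [← sub_sub_sub_cancel_right z y q, norm_sub_sq_real, ← neg_sub y q, norm_neg]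
  have hinner : ⟪γ z, y - q⟫ = ⟪γ z, y - z⟫ - ⟪γ z, q - z⟫ := by
    rw [← inner_sub_right, sub_sub_sub_cancel_right]
  rw [norm_sub_rev q z] at hdesc
  linear_combination hsup + hdesc + hvi' - hinner - L / 2 * hnorm

theorem HasSmoothSupergradient.add_norm_projGradStep_sub_sq_le
    (hφ : HasSmoothSupergradient φ γ L) (hL : 0 < L) (hC : Convex ℝ C)
    (hP : IsNearestPointMap C P) {z : H} (hz : z ∈ C) :
    φ z + L / 2 * ‖projGradStep P γ L z - z‖ ^ 2 ≤ φ (projGradStep P γ L z) := by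
  have h := hφ.sub_projGradStep_le hL hC hP z hz
  rw [sub_self, norm_zero] at h
  linarith

variable {X : Set H} {π : H → H} {φstar κ : ℝ}

theorem HasSmoothSupergradient.gap_projGradStep_le (hφ : HasSmoothSupergradient φ γ L)
    (hL : 0 < L) (hC : Convex ℝ C) (hP : IsNearestPointMap C P) (hπ : IsNearestPointMap X π)
    (hX : ∀ y ∈ X, y ∈ C ∧ φ y = φstar) (z : H) :
    φstar - φ (projGradStep P γ L z) ≤
      L / 2 * (‖z - π z‖ ^ 2 - ‖projGradStep P γ L z - π (projGradStep P γ L z)‖ ^ 2) := by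
  obtain ⟨hπC, hπφ⟩ := hX _ (hπ z).1
  have hnearest : ‖projGradStep P γ L z - π (projGradStep P γ L z)‖ ≤
      ‖projGradStep P γ L z - π z‖ := (hπ _).2 _ (hπ z).1
  have h := hφ.sub_projGradStep_le hL hC hP z hπC
  rw [hπφ] at h
  have h2 := mul_le_mul_of_nonneg_left (pow_le_pow_left₀ (norm_nonneg _) hnearest 2)
    (half_pos hL).le
  linarith

theorem HasSmoothSupergradient.dist_projGradStep_le (hφ : HasSmoothSupergradient φ γ L)
    (hL : 0 < L) (hC : Convex ℝ C) (hP : IsNearestPointMap C P) (hπ : IsNearestPointMap X π)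
    (hX : ∀ y ∈ X, y ∈ C ∧ φ y = φstar) (hφle : ∀ z ∈ C, φ z ≤ φstar) (hκ : 0 < κ) (z : H)
    (hEB : ‖projGradStep P γ L z - π (projGradStep P γ L z)‖ ≤
      κ * ‖projGradStep P γ L (projGradStep P γ L z) - projGradStep P γ L z‖) :
    ‖projGradStep P γ L z - π (projGradStep P γ L z)‖ ≤ κ / √(1 + κ ^ 2) * ‖z - π z‖ := by
  set z' := projGradStep P γ L z
  set r := ‖z - π z‖
  set r' := ‖z' - π z'‖
  set s := ‖projGradStep P γ L z' - z'‖
  have hz' : z' ∈ C := (hP _).1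
  have hgap := hφ.gap_projGradStep_le hL hC hP hπ hX z
  have hascent : φ z' + L / 2 * s ^ 2 ≤ φstar :=
    (hφ.add_norm_projGradStep_sub_sq_le hL hC hP hz').trans (hφle _ (hP _).1)
  have hEB2 : r' ^ 2 ≤ κ ^ 2 * s ^ 2 := by
    rw [← mul_pow]; exact pow_le_pow_left₀ (norm_nonneg _) hEB 2
  have hkey : L / 2 * r' ^ 2 ≤ L / 2 * (κ ^ 2 * (r ^ 2 - r' ^ 2)) :=
    calc L / 2 * r' ^ 2 ≤ κ ^ 2 * (L / 2 * s ^ 2) := by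
          linarith [mul_le_mul_of_nonneg_left hEB2 (half_pos hL).le]
      _ ≤ κ ^ 2 * (φstar - φ z') := by gcongr; linarith
      _ ≤ κ ^ 2 * (L / 2 * (r ^ 2 - r' ^ 2)) := by gcongr
      _ = L / 2 * (κ ^ 2 * (r ^ 2 - r' ^ 2)) := by ring
  have hsq : (r' * √(1 + κ ^ 2)) ^ 2 ≤ (κ * r) ^ 2 := by
    rw [mul_pow, mul_pow, Real.sq_sqrt (by positivity)]
    linarith [le_of_mul_le_mul_left hkey (half_pos hL)]
  rw [div_mul_eq_mul_div, le_div_iff₀ (by positivity)]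
  exact (pow_le_pow_iff_left₀ (by positivity) (by positivity) two_ne_zero).1 hsq

theorem HasSmoothSupergradient.linear_convergence (hφ : HasSmoothSupergradient φ γ L)
    (hL : 0 < L) (hC : Convex ℝ C) (hP : IsNearestPointMap C P) (hπ : IsNearestPointMap X π)
    (hX : ∀ y ∈ X, y ∈ C ∧ φ y = φstar) (hφle : ∀ z ∈ C, φ z ≤ φstar) (hκ : 0 < κ)
    {x : ℕ → H} (hx0 : x 0 ∈ C) (hx : ∀ k, x (k + 1) = projGradStep P γ L (x k))
    (hEB : ∀ z ∈ C, φstar - φ z ≤ φstar - φ (x 0) →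
      ‖z - π z‖ ≤ κ * ‖projGradStep P γ L z - z‖) :
    (∀ k, ‖x k - π (x k)‖ ≤ (κ / √(1 + κ ^ 2)) ^ k * ‖x 0 - π (x 0)‖) ∧
    (∀ k, 1 ≤ k → φstar - φ (x k) ≤
      L * ‖x 0 - π (x 0)‖ ^ 2 / 2 * (κ ^ 2 / (1 + κ ^ 2)) ^ (k - 1)) := by
  have hmem : ∀ k, x k ∈ C := by
    rintro (_ | k)
    · exact hx0
    · rw [hx]; exact (hP _).1
  have hmono : Monotone fun k => φ (x k) := monotone_nat_of_le_succ fun k => by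
    rw [hx]
    exact le_of_add_le_of_nonneg_left (hφ.add_norm_projGradStep_sub_sq_le hL hC hP (hmem k))
      (by positivity)
  have hcontract : ∀ k, ‖x (k + 1) - π (x (k + 1))‖ ≤ κ / √(1 + κ ^ 2) * ‖x k - π (x k)‖ := by
    intro k
    have hEBk := hEB _ (hmem (k + 1)) (by linarith [hmono (Nat.zero_le (k + 1))])
    rw [hx] at hEBk ⊢
    exact hφ.dist_projGradStep_le hL hC hP hπ hX hφle hκ (x k) hEBk
  have hdist : ∀ k, ‖x k - π (x k)‖ ≤ (κ / √(1 + κ ^ 2)) ^ k * ‖x 0 - π (x 0)‖ :=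
    fun k => le_geom (u := fun k => ‖x k - π (x k)‖) (by positivity) k fun j _ => hcontract j
  refine ⟨hdist, ?_⟩
  rintro (_ | k) hk
  · omega
  have hratio : (κ / √(1 + κ ^ 2)) ^ 2 = κ ^ 2 / (1 + κ ^ 2) := by
    rw [div_pow, Real.sq_sqrt (by positivity)]
  calc φstar - φ (x (k + 1)) ≤ L / 2 * ‖x k - π (x k)‖ ^ 2 := by
        rw [hx]
        linarith [hφ.gap_projGradStep_le hL hC hP hπ hX (x k), mul_nonneg (half_pos hL).le
          (sq_nonneg ‖projGradStep P γ L (x k) - π (projGradStep P γ L (x k))‖)]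
    _ ≤ L / 2 * ((κ / √(1 + κ ^ 2)) ^ k * ‖x 0 - π (x 0)‖) ^ 2 := by
        gcongr; exact hdist k
    _ = L * ‖x 0 - π (x 0)‖ ^ 2 / 2 * (κ ^ 2 / (1 + κ ^ 2)) ^ (k + 1 - 1) := by
        rw [Nat.add_sub_cancel, ← hratio]; ring

end ProjectedGradient

theorem StrongConvexOn.add_sq_norm_sub_le_of_isMinOn {E : Type*} [NormedAddCommGroup E]
    [InnerProductSpace ℝ E] {s : Set E} {m : ℝ} {φ : E → ℝ} (hφ : StrongConvexOn s m φ) {x : E}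
    (hx : x ∈ s) (hmin : IsMinOn φ s x) {y : E} (hy : y ∈ s) :
    φ x + m / 2 * ‖y - x‖ ^ 2 ≤ φ y := by
  have key : ∀ t ∈ Ioc (0 : ℝ) 1, (1 - t) * (m / 2 * ‖y - x‖ ^ 2) ≤ φ y - φ x := by
    rintro t ⟨ht0, ht1⟩
    have hconv := hφ.2 hy hx ht0.le (sub_nonneg.2 ht1) (add_sub_cancel t 1)
    have hle : φ x ≤ φ (t • y + (1 - t) • x) :=
      hmin (hφ.1 hy hx ht0.le (sub_nonneg.2 ht1) (add_sub_cancel t 1))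
    rw [smul_eq_mul, smul_eq_mul] at hconv
    refine le_of_mul_le_mul_left ?_ ht0
    linarith
  have hlim : Tendsto (fun t : ℝ => (1 - t) * (m / 2 * ‖y - x‖ ^ 2)) (𝓝[>] 0)
      (𝓝 (m / 2 * ‖y - x‖ ^ 2)) := by
    have hcont : Continuous fun t : ℝ => (1 - t) * (m / 2 * ‖y - x‖ ^ 2) := by fun_prop
    simpa using (hcont.tendsto 0).mono_left nhdsWithin_le_nhds
  linarith [le_of_tendsto hlim (eventually_of_mem (Ioc_mem_nhdsGT one_pos) key)]

section Lagrangian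

variable {E F : Type*} [NormedAddCommGroup E] [InnerProductSpace ℝ E] [NormedAddCommGroup F]
  [InnerProductSpace ℝ F]

def lagrangian (f : E → ℝ) (G : E →L[ℝ] F) (g : F) (u : E) (x : F) : ℝ :=
  f u + ⟪x, -(G u) - g⟫

def dualFunction (f : E → ℝ) (G : E →L[ℝ] F) (g : F) (umin : F → E) (x : F) : ℝ :=
  lagrangian f G g (umin x) x

variable {f : E → ℝ} {G : E →L[ℝ] F} {g : F} {U : Set E} {umin : F → E} {σ : ℝ}

theorem lagrangian_eq_add_inner (u : E) (x y : F) :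
    lagrangian f G g u y = lagrangian f G g u x + ⟪-(G u) - g, y - x⟫ := by
  simp only [lagrangian, inner_sub_right, real_inner_comm y, real_inner_comm x]
  ring

theorem StrongConvexOn.lagrangian (hf : StrongConvexOn U σ f) (x : F) :
    StrongConvexOn U σ (lagrangian f G g · x) := by
  have hlin : ConvexOn ℝ U fun u => ⟪x, -(G u) - g⟫ := by
    refine ((((-(innerSL ℝ x).comp G : E →L[ℝ] ℝ) : E →ₗ[ℝ] ℝ).convexOn hf.1).add_const
      (-⟪x, g⟫)).congr fun u _ => ?_
    simp [sub_eq_add_neg, inner_add_right]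
  have h := hf.add hlin.uniformConvexOn_zero
  rwa [add_zero] at h

theorem dualFunction_le_add_inner (humin : ∀ x, umin x ∈ U ∧ IsMinOn (lagrangian f G g · x) U (umin x))
    (x y : F) :
    dualFunction f G g umin y ≤ dualFunction f G g umin x + ⟪-(G (umin x)) - g, y - x⟫ :=
  calc dualFunction f G g umin y ≤ lagrangian f G g (umin x) y := (humin y).2 (humin x).1
    _ = _ := lagrangian_eq_add_inner _ _ _

theorem add_inner_sub_le_dualFunction (hσ : 0 < σ) (hf : StrongConvexOn U σ f)
    (humin : ∀ x, umin x ∈ U ∧ IsMinOn (lagrangian f G g · x) U (umin x)) (x y : F) :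
    dualFunction f G g umin x + ⟪-(G (umin x)) - g, y - x⟫ - ‖G‖ ^ 2 / σ / 2 * ‖y - x‖ ^ 2 ≤
      dualFunction f G g umin y := by
  set a := ‖umin y - umin x‖
  set b := ‖y - x‖
  have hgrowth : dualFunction f G g umin x + σ / 2 * a ^ 2 ≤ lagrangian f G g (umin y) x :=
    (hf.lagrangian x).add_sq_norm_sub_le_of_isMinOn (humin x).1 (humin x).2 (humin y).1
  have hshift : dualFunction f G g umin y =
      lagrangian f G g (umin y) x + ⟪-(G (umin y)) - g, y - x⟫ :=
    lagrangian_eq_add_inner _ _ _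
  have hsplit : ⟪-(G (umin y)) - g, y - x⟫ =
      ⟪-(G (umin x)) - g, y - x⟫ - ⟪G (umin y - umin x), y - x⟫ := by
    rw [map_sub, ← inner_sub_left]; congr 1; abel
  have hcs : ⟪G (umin y - umin x), y - x⟫ ≤ ‖G‖ * a * b :=
    (real_inner_le_norm _ _).trans (mul_le_mul_of_nonneg_right (G.le_opNorm _) (norm_nonneg _))
  have hamgm : σ / 2 * a ^ 2 + ‖G‖ ^ 2 / σ / 2 * b ^ 2 - ‖G‖ * a * b =
      (σ * a - ‖G‖ * b) ^ 2 / (2 * σ) := by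
    field_simp; ring
  have hsq : 0 ≤ (σ * a - ‖G‖ * b) ^ 2 / (2 * σ) := by positivity
  linarith

theorem dualFunction_le_of_inner_nonneg
    (humin : ∀ x, umin x ∈ U ∧ IsMinOn (lagrangian f G g · x) U (umin x))
    {u : E} (hu : u ∈ U) {x : F} (hx : 0 ≤ ⟪x, G u + g⟫) : dualFunction f G g umin x ≤ f u := by
  have h : dualFunction f G g umin x ≤ lagrangian f G g u x := (humin x).2 hu
  have hval : lagrangian f G g u x = f u - ⟪x, G u + g⟫ := by
    rw [lagrangian, ← neg_add', inner_neg_right, sub_eq_add_neg]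
  linarith

theorem hasSmoothSupergradient_dualFunction (hσ : 0 < σ) (hf : StrongConvexOn U σ f)
    (humin : ∀ x, umin x ∈ U ∧ IsMinOn (lagrangian f G g · x) U (umin x)) :
    HasSmoothSupergradient (dualFunction f G g umin) (fun x => -(G (umin x)) - g)
      (‖G‖ ^ 2 / σ) :=
  ⟨dualFunction_le_add_inner humin, add_inner_sub_le_dualFunction hσ hf humin⟩

end Lagrangian

theorem stmt_14_general {n p : ℕ}
    (f : EuclideanSpace ℝ (Fin n) → ℝ) (σf : ℝ) (hσf : 0 < σf)
    (hfsc : StrongConvexOn Set.univ σf f)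
    (U : Set (EuclideanSpace ℝ (Fin n))) (hUcv : Convex ℝ U)
    (G : EuclideanSpace ℝ (Fin n) →L[ℝ] EuclideanSpace ℝ (Fin p)) (hG : G ≠ 0) (g : EuclideanSpace ℝ (Fin p))
    (K : Set (EuclideanSpace ℝ (Fin p)))
    (Kstar : Set (EuclideanSpace ℝ (Fin p)))
    (hKstar : Kstar = {x : EuclideanSpace ℝ (Fin p) | ∀ v ∈ K, 0 ≤ ⟪x, v⟫})
    (Lag : EuclideanSpace ℝ (Fin n) → EuclideanSpace ℝ (Fin p) → ℝ)
    (hLag : ∀ u x, Lag u x = f u + ⟪x, -(G u) - g⟫)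
    (uu : EuclideanSpace ℝ (Fin p) → EuclideanSpace ℝ (Fin n))
    (huu : ∀ x : EuclideanSpace ℝ (Fin p), uu x ∈ U ∧ ∀ u ∈ U, Lag (uu x) x ≤ Lag u x)
    (d : EuclideanSpace ℝ (Fin p) → ℝ) (hd : ∀ x, d x = Lag (uu x) x)
    (ustar : EuclideanSpace ℝ (Fin n))
    (hustar : ustar ∈ U ∧ G ustar + g ∈ K ∧ ∀ u ∈ U, G u + g ∈ K → f ustar ≤ f u)
    (fstar : ℝ) (hfstar : fstar = f ustar)
    (Xstar : Set (EuclideanSpace ℝ (Fin p))) (hXstar : Xstar = {x ∈ Kstar | d x = fstar})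
    (Ld : ℝ) (hLd : Ld = ‖G‖ ^ 2 / σf)
    (projKs : EuclideanSpace ℝ (Fin p) → EuclideanSpace ℝ (Fin p))
    (hprojKs : ∀ z : EuclideanSpace ℝ (Fin p), projKs z ∈ Kstar ∧ ∀ w ∈ Kstar, ‖z - projKs z‖ ≤ ‖z - w‖)
    (gmap : EuclideanSpace ℝ (Fin p) → EuclideanSpace ℝ (Fin p))
    (hgmap : ∀ z : EuclideanSpace ℝ (Fin p), gmap z = projKs (z + (1 / Ld) • (-(G (uu z)) - g)) - z)
    (projX : EuclideanSpace ℝ (Fin p) → EuclideanSpace ℝ (Fin p))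
    (hprojX : ∀ z : EuclideanSpace ℝ (Fin p), projX z ∈ Xstar ∧ ∀ w ∈ Xstar, ‖z - projX z‖ ≤ ‖z - w‖)
    (x : ℕ → EuclideanSpace ℝ (Fin p)) (hx0K : x 0 ∈ Kstar)
    (hxrec : ∀ k, x (k + 1) = projKs (x k + (1 / Ld) • (-(G (uu (x k))) - g)))
    (κ : ℝ) (hκ : 0 < κ)
    (hEB : ∀ z ∈ Kstar, fstar - d z ≤ fstar - d (x 0) →
      ‖z - projX z‖ ≤ κ * ‖gmap z‖)
    (Rd : ℝ) (hRd : Rd = ‖x 0 - projX (x 0)‖) :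
    (∀ k : ℕ, ‖x k - projX (x k)‖ ≤ (κ / Real.sqrt (1 + κ ^ 2)) ^ k * Rd) ∧
    (∀ k : ℕ, 1 ≤ k →
      fstar - d (x k) ≤ Ld * Rd ^ 2 / 2 * (κ ^ 2 / (1 + κ ^ 2)) ^ (k - 1)) := by
  obtain rfl : Lag = lagrangian f G g := funext₂ hLag
  obtain rfl : d = dualFunction f G g uu := funext hd
  subst hKstar hXstar hfstar hLd hRd
  have hLpos : 0 < ‖G‖ ^ 2 / σf := by have := norm_pos_iff.2 hG; positivity
  have hKstar_convex : Convex ℝ {x : EuclideanSpace ℝ (Fin p) | ∀ v ∈ K, 0 ≤ ⟪x, v⟫} := by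
    intro a ha b hb s t hs ht _ v hv
    rw [inner_add_left, real_inner_smul_left, real_inner_smul_left]
    exact add_nonneg (mul_nonneg hs (ha v hv)) (mul_nonneg ht (hb v hv))
  have hdual := hasSmoothSupergradient_dualFunction hσf
    ⟨hUcv, fun u _ v _ => hfsc.2 (mem_univ u) (mem_univ v)⟩ huu
  refine hdual.linear_convergence hLpos hKstar_convex hprojKs hprojX (fun y hy => hy)
    (fun z hz => dualFunction_le_of_inner_nonneg huu hustar.1 (hz _ hustar.2.1)) hκ hx0K hxrec
    fun z hz hgap => ?_
  have h := hEB z hz hgap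
  rwa [hgmap] at h

theorem stmt_14 {n p : ℕ}
    (f : EuclideanSpace ℝ (Fin n) → ℝ) (σf : ℝ) (hσf : 0 < σf)
    (hfc : Continuous f) (hfsc : StrongConvexOn Set.univ σf f)
    (U : Set (EuclideanSpace ℝ (Fin n))) (hUne : U.Nonempty) (hUcl : IsClosed U) (hUcv : Convex ℝ U)
    (G : EuclideanSpace ℝ (Fin n) →L[ℝ] EuclideanSpace ℝ (Fin p)) (hG : G ≠ 0) (g : EuclideanSpace ℝ (Fin p))
    (K : Set (EuclideanSpace ℝ (Fin p))) (hKne : K.Nonempty) (hKcl : IsClosed K) (hKcv : Convex ℝ K)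
    (hKcone : ∀ c : ℝ, 0 ≤ c → ∀ v ∈ K, c • v ∈ K)
    (Kstar : Set (EuclideanSpace ℝ (Fin p)))
    (hKstar : Kstar = {x : EuclideanSpace ℝ (Fin p) | ∀ v ∈ K, 0 ≤ ⟪x, v⟫})
    (Lag : EuclideanSpace ℝ (Fin n) → EuclideanSpace ℝ (Fin p) → ℝ)
    (hLag : ∀ u x, Lag u x = f u + ⟪x, -(G u) - g⟫)
    (uu : EuclideanSpace ℝ (Fin p) → EuclideanSpace ℝ (Fin n))
    (huu : ∀ x : EuclideanSpace ℝ (Fin p), uu x ∈ U ∧ ∀ u ∈ U, Lag (uu x) x ≤ Lag u x)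
    (d : EuclideanSpace ℝ (Fin p) → ℝ) (hd : ∀ x, d x = Lag (uu x) x)
    (ustar : EuclideanSpace ℝ (Fin n))
    (hustar : ustar ∈ U ∧ G ustar + g ∈ K ∧ ∀ u ∈ U, G u + g ∈ K → f ustar ≤ f u)
    (fstar : ℝ) (hfstar : fstar = f ustar)
    (Xstar : Set (EuclideanSpace ℝ (Fin p))) (hXstar : Xstar = {x ∈ Kstar | d x = fstar})
    (hXne : Xstar.Nonempty)
    (Ld : ℝ) (hLd : Ld = ‖G‖ ^ 2 / σf)
    (projKs : EuclideanSpace ℝ (Fin p) → EuclideanSpace ℝ (Fin p))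
    (hprojKs : ∀ z : EuclideanSpace ℝ (Fin p), projKs z ∈ Kstar ∧ ∀ w ∈ Kstar, ‖z - projKs z‖ ≤ ‖z - w‖)
    (gmap : EuclideanSpace ℝ (Fin p) → EuclideanSpace ℝ (Fin p))
    (hgmap : ∀ z : EuclideanSpace ℝ (Fin p), gmap z = projKs (z + (1 / Ld) • (-(G (uu z)) - g)) - z)
    (projX : EuclideanSpace ℝ (Fin p) → EuclideanSpace ℝ (Fin p))
    (hprojX : ∀ z : EuclideanSpace ℝ (Fin p), projX z ∈ Xstar ∧ ∀ w ∈ Xstar, ‖z - projX z‖ ≤ ‖z - w‖)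
    (x : ℕ → EuclideanSpace ℝ (Fin p)) (hx0K : x 0 ∈ Kstar)
    (hxrec : ∀ k, x (k + 1) = projKs (x k + (1 / Ld) • (-(G (uu (x k))) - g)))
    (κ : ℝ) (hκ : 0 < κ) (hMpos : 0 < fstar - d (x 0))
    (hEB : ∀ z ∈ Kstar, fstar - d z ≤ fstar - d (x 0) →
      ‖z - projX z‖ ≤ κ * ‖gmap z‖)
    (Rd : ℝ) (hRd : Rd = ‖x 0 - projX (x 0)‖) :
    (∀ k : ℕ, ‖x k - projX (x k)‖ ≤ (κ / Real.sqrt (1 + κ ^ 2)) ^ k * Rd) ∧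
    (∀ k : ℕ, 1 ≤ k →
      fstar - d (x k) ≤ Ld * Rd ^ 2 / 2 * (κ ^ 2 / (1 + κ ^ 2)) ^ (k - 1)) :=
  stmt_14_general f σf hσf hfsc U hUcv G hG g K Kstar hKstar Lag hLag uu huu d hd ustar hustar fstar
    hfstar Xstar hXstar Ld hLd projKs hprojKs gmap hgmap projX hprojX x hx0K hxrec κ hκ hEB Rd hRd
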